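/- With ρ and τ_W(p) as defined, the quantity tr[ρ (τ_W(p)ᵀ ⊗ H_{π/4})] = (3 − √2 − (1+√2)p)/12 is strictly negative if and only if p > 4√2 − 5. -/

import Mathlib

/-!
The observable is a product across the split (qubits 1, 3) | (qubits 2, 4), and so is every
Pauli term `σᵢ⊗σⱼ⊗σᵢ⊗σⱼ` of `ρ`; hence each term contributes
`R i j · tr((σᵢ⊗σᵢ) τ_W(p)ᵀ) · tr((σⱼ⊗σⱼ) H_{π/4})`. These Pauli correlations are `(1, -p, -p, -p)`
and `(4, -2√2, 0, -2√2)`, so the trace is affine in `p`. The sign condition follows from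
`3 - √2 = (1 + √2)(4√2 - 5)`.
-/

open Matrix Kronecker Real ComplexOrder

noncomputable section

def σx : Matrix (Fin 2) (Fin 2) ℂ := !![0, 1; 1, 0]
def σy : Matrix (Fin 2) (Fin 2) ℂ := !![0, -Complex.I; Complex.I, 0]
def σz : Matrix (Fin 2) (Fin 2) ℂ := !![1, 0; 0, -1]

def pauli : Fin 4 → Matrix (Fin 2) (Fin 2) ℂ := ![1, σx, σy, σz]

def R : Matrix (Fin 4) (Fin 4) ℝ :=
  (9 : ℝ)⁻¹ • !![9, 3, 3, 3; 1, -1, 3, -1; 1, -1, 3, -1; 1, -1, 3, -1]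

/-- The 4-qubit ancillary state `ρ = (1/16) Σ_{i,j} R_{ij} σᵢ⊗σⱼ⊗σᵢ⊗σⱼ`. -/
def ancilla :
    Matrix ((Fin 2 × Fin 2) × (Fin 2 × Fin 2)) ((Fin 2 × Fin 2) × (Fin 2 × Fin 2)) ℂ :=
  (16 : ℂ)⁻¹ • ∑ i : Fin 4, ∑ j : Fin 4,
    (R i j : ℂ) • ((pauli i ⊗ₖ pauli j) ⊗ₖ (pauli i ⊗ₖ pauli j))

/-- Singlet `|Ψ⁻⟩ = (|01⟩ − |10⟩)/√2`. -/
def PsiM : Fin 2 × Fin 2 → ℂ :=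
  fun p => (Real.sqrt 2 : ℂ)⁻¹ *
    (if p = (0, 1) then 1 else if p = (1, 0) then -1 else 0)

/-- Two-qubit Werner state `τ_W(p) = p |Ψ⁻⟩⟨Ψ⁻| + (1−p) 1₄/4`. -/
def wernerState (p : ℝ) : Matrix (Fin 2 × Fin 2) (Fin 2 × Fin 2) ℂ :=
  (p : ℂ) • vecMulVec PsiM (star PsiM) + (((1 - p) / 4 : ℝ) : ℂ) • 1

/-- `H_{π/4} = 1₄ − (1/√2)(σx⊗σx) − (1/√2)(σz⊗σz)`. -/
def Hpi4 : Matrix (Fin 2 × Fin 2) (Fin 2 × Fin 2) ℂ :=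
  1 - (Real.cos (π / 4) : ℂ) • (σx ⊗ₖ σx) - (Real.sin (π / 4) : ℂ) • (σz ⊗ₖ σz)

/-- The observable `τ_W(p)ᵀ ⊗ H_{π/4}`, with `τ_W(p)ᵀ` acting on qubits 1 and 3
of `ρ` (the `σᵢ` factors) and `H_{π/4}` acting on qubits 2 and 4 (the `σⱼ` factors). -/
def obs (p : ℝ) :
    Matrix ((Fin 2 × Fin 2) × (Fin 2 × Fin 2)) ((Fin 2 × Fin 2) × (Fin 2 × Fin 2)) ℂ :=
  fun q r =>
    (wernerState p)ᵀ (q.1.1, q.2.1) (r.1.1, r.2.1) * Hpi4 (q.1.2, q.2.2) (r.1.2, r.2.2)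

namespace Matrix

variable {α l m n o : Type*} [Fintype l] [Fintype m] [Fintype n] [Fintype o]

theorem trace_submatrix_equiv [AddCommMonoid α] (M : Matrix m m α) (e : l ≃ m) :
    trace (M.submatrix e e) = trace M :=
  e.sum_comp M.diag

theorem trace_kronecker_kronecker_mul_submatrix_prodProdProdComm [CommSemiring α]
    (P : Matrix l l α) (Q : Matrix m m α) (P' : Matrix n n α) (Q' : Matrix o o α)
    (A : Matrix (l × n) (l × n) α) (B : Matrix (m × o) (m × o) α) :
    trace ((P ⊗ₖ Q) ⊗ₖ (P' ⊗ₖ Q') *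
        (A ⊗ₖ B).submatrix (Equiv.prodProdProdComm l m n o) (Equiv.prodProdProdComm l m n o)) =
      trace (P ⊗ₖ P' * A) * trace (Q ⊗ₖ Q' * B) := by
  set e := Equiv.prodProdProdComm l m n o
  have hPQ : (P ⊗ₖ Q) ⊗ₖ (P' ⊗ₖ Q') = ((P ⊗ₖ P') ⊗ₖ (Q ⊗ₖ Q')).submatrix e e := by
    ext ⟨⟨_, _⟩, _, _⟩ ⟨⟨_, _⟩, _, _⟩
    simp [e, mul_mul_mul_comm]
  rw [hPQ, submatrix_mul_equiv, trace_submatrix_equiv, ← mul_kronecker_mul, trace_kronecker]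

end Matrix

def pauliCorrelation (X : Matrix (Fin 2 × Fin 2) (Fin 2 × Fin 2) ℂ) (i : Fin 4) : ℂ :=
  trace (pauli i ⊗ₖ pauli i * X)

theorem trace_ancilla_mul_submatrix (A B : Matrix (Fin 2 × Fin 2) (Fin 2 × Fin 2) ℂ) :
    trace (ancilla * (A ⊗ₖ B).submatrix (Equiv.prodProdProdComm _ _ _ _)
        (Equiv.prodProdProdComm _ _ _ _)) =
      (16 : ℂ)⁻¹ * ∑ i, ∑ j, (R i j : ℂ) * pauliCorrelation A i * pauliCorrelation B j := by
  simp only [ancilla, smul_mul, Finset.sum_mul, trace_smul, trace_sum,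
    trace_kronecker_kronecker_mul_submatrix_prodProdProdComm, pauliCorrelation, smul_eq_mul,
    mul_assoc]

theorem pauliCorrelation_wernerState_transpose (p : ℝ) :
    pauliCorrelation (wernerState p)ᵀ = ![1, -(p : ℂ), -(p : ℂ), -(p : ℂ)] := by
  have hsqrt : ((√2 : ℝ) : ℂ)⁻¹ * ((√2 : ℝ) : ℂ)⁻¹ = 2⁻¹ := by
    rw [← mul_inv, ← Complex.ofReal_mul, Real.mul_self_sqrt zero_le_two, Complex.ofReal_ofNat]
  funext i
  fin_cases i <;>
  simp [pauliCorrelation, wernerState, PsiM, pauli, σx, σy, σz, trace, mul_apply,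
    Fintype.sum_prod_type, Fin.sum_univ_two, vecMulVec_apply, one_apply, hsqrt] <;>
  ring

theorem pauliCorrelation_Hpi4 : pauliCorrelation Hpi4 =
    ![4, -2 * ((√2 : ℝ) : ℂ), 0, -2 * ((√2 : ℝ) : ℂ)] := by
  funext i
  fin_cases i <;>
  simp [pauliCorrelation, Hpi4, pauli, σx, σy, σz, trace, mul_apply, Fintype.sum_prod_type,
    Fin.sum_univ_two, one_apply, Real.cos_pi_div_four, Real.sin_pi_div_four] <;>
  ring

theorem obs_eq_submatrix_kronecker (p : ℝ) :
    obs p = ((wernerState p)ᵀ ⊗ₖ Hpi4).submatrix (Equiv.prodProdProdComm _ _ _ _)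
      (Equiv.prodProdProdComm _ _ _ _) :=
  rfl

theorem sub_sqrt_two_div_twelve_neg_iff (p : ℝ) :
    (3 - √2 - (1 + √2) * p) / 12 < 0 ↔ p > 4 * √2 - 5 := by
  have hfactor : (3 - √2 - (1 + √2) * p) / 12 = (1 + √2) / 12 * (4 * √2 - 5 - p) := by
    linear_combination (-1 / 3 : ℝ) * Real.sq_sqrt zero_le_two
  rw [hfactor, ← smul_eq_mul, smul_neg_iff_of_pos_left (by positivity), sub_neg]

/-- `tr[ρ (τ_W(p)ᵀ ⊗ H_{π/4})] = (3 − √2 − (1+√2)p)/12`, and this quantity is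
strictly negative if and only if `p > 4√2 − 5`. -/
theorem trace_neg_iff (p : ℝ) :
    (ancilla * obs p).trace
      = (((3 - Real.sqrt 2 - (1 + Real.sqrt 2) * p) / 12 : ℝ) : ℂ) ∧
    ((3 - Real.sqrt 2 - (1 + Real.sqrt 2) * p) / 12 < 0 ↔ p > 4 * Real.sqrt 2 - 5) := by
  refine ⟨?_, sub_sqrt_two_div_twelve_neg_iff p⟩
  rw [obs_eq_submatrix_kronecker, trace_ancilla_mul_submatrix,
    pauliCorrelation_wernerState_transpose, pauliCorrelation_Hpi4]
  simp only [R, Fin.sum_univ_four, Matrix.smul_apply, of_apply, cons_val', cons_val_fin_one,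
    cons_val_zero, cons_val_one, cons_val, smul_eq_mul]
  push_cast
  ring
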